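/- Let f(x) = Σ_{j=1}^{n+2} c_j x^{a_j} be an n-variate (n+2)-nomial with nonzero real coefficients whose support A = {a_1, …, a_{n+2}} ⊂ ℤ^n is a degenerate circuit of cardinality n+2. Then the zero set Z_+(f) of f in ℝ^n_+ is a (possibly empty) smooth embedded (n−1)-dimensional submanifold of ℝ^n_+, and every connected component of Z_+(f) is non-compact. -/

import Mathlib

/-!
Since the points other than `a j0` are affinely independent, the circuit relation `γ` is, up to
scaling, the only affine relation that is nonzero at `j0`; subtracting a multiple of it from any
other relation shows that every affine relation among the exponents vanishes at an index `j1`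
outside the circuit. At a zero `x` where all partial derivatives vanish, Euler's identity makes
`(c j * x ^ a j)_j` such a relation, although its `j1`-entry is nonzero; so every zero is regular.

Dually there is a direction `w` in logarithmic coordinates along which every monomial
`x ^ (a j - a j0)` is constant except the `j1`-th, which grows like `e ^ t`. Hence, after dividing
by `x ^ a j0`, the zero set becomes the graph of a continuous function over an open subset of the
hyperplane `⟪a j1 - a j0, ·⟫ = 0`, and a connected component of an open subset of a real vector
space of positive dimension is never compact. The hyperplane is not `0` because `n ≥ 2`: a nonzero
affine relation among distinct points has at least three nonzero entries, and `γ j1 = 0`.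
-/

open Finset

/-- A family of N points of ℝ^n is a degenerate circuit: there is a point
(index j0) and a proper subfamily S containing j0 such that the family with j0
removed is affinely independent and the subfamily on S is a circuit. -/
def IsDegenerateCircuitFam {N n : ℕ} (v : Fin N → (Fin n → ℝ)) : Prop :=
  ∃ (j0 : Fin N) (S : Finset (Fin N)), j0 ∈ S ∧ S ≠ Finset.univ ∧
    (∀ γ : Fin N → ℝ, γ j0 = 0 →
      ∑ j, γ j • v j = 0 → ∑ j, γ j = 0 → γ = 0) ∧
    (∃ γ : Fin N → ℝ, γ ≠ 0 ∧ (∀ j ∉ S, γ j = 0) ∧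
      ∑ j, γ j • v j = 0 ∧ ∑ j, γ j = 0) ∧
    (∀ T : Finset (Fin N), T ⊂ S →
      ∀ γ : Fin N → ℝ, (∀ j ∉ T, γ j = 0) →
        ∑ j, γ j • v j = 0 → ∑ j, γ j = 0 → γ = 0)

open Set

section AffineRelations

variable {ι E : Type*} [Fintype ι] [AddCommGroup E] [Module ℝ E]

def affineRelations (v : ι → E) : Submodule ℝ (ι → ℝ) where
  carrier := {δ | ∑ j, δ j • v j = 0 ∧ ∑ j, δ j = 0}
  add_mem' := by
    rintro δ η ⟨hδv, hδ⟩ ⟨hηv, hη⟩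
    simp only [Set.mem_ofPred_eq, Pi.add_apply, add_smul, sum_add_distrib, hδv, hηv, hδ, hη,
      add_zero, and_self]
  zero_mem' := by simp
  smul_mem' := by
    rintro r δ ⟨hδv, hδ⟩
    simp only [Set.mem_ofPred_eq, Pi.smul_apply, smul_eq_mul, mul_smul, ← smul_sum, ← mul_sum,
      hδv, hδ, smul_zero, mul_zero, and_self]

theorem apply_eq_zero_of_mem_affineRelations {v : ι → E} {j0 j1 : ι} {γ δ : ι → ℝ}
    (hindep : ∀ η ∈ affineRelations v, η j0 = 0 → η = 0)
    (hγ : γ ∈ affineRelations v) (hγj0 : γ j0 ≠ 0) (hγj1 : γ j1 = 0)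
    (hδ : δ ∈ affineRelations v) : δ j1 = 0 := by
  have hη := hindep (γ j0 • δ - δ j0 • γ)
    (sub_mem (Submodule.smul_mem _ _ hδ) (Submodule.smul_mem _ _ hγ)) (by simp [mul_comm])
  simpa [hγj1, hγj0] using congrFun hη j1

theorem two_lt_card_filter_ne_zero_of_mem_affineRelations [DecidableEq ι] {v : ι → E}
    (hv : Function.Injective v) {γ : ι → ℝ} (hγ : γ ∈ affineRelations v) (hγ0 : γ ≠ 0) :
    2 < #{j | γ j ≠ 0} := by
  obtain ⟨hγv, hγsum⟩ := hγ
  obtain ⟨p, hp⟩ : ∃ p, γ p ≠ 0 := Function.ne_iff.mp hγ0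
  obtain ⟨q, hqp, hq⟩ : ∃ q, q ≠ p ∧ γ q ≠ 0 := by
    by_contra! h
    exact hp (by rwa [Fintype.sum_eq_single p h] at hγsum)
  obtain ⟨r, ⟨hrp, hrq⟩, hr⟩ : ∃ r, (r ≠ p ∧ r ≠ q) ∧ γ r ≠ 0 := by
    by_contra! h
    have hsum := Fintype.sum_eq_add p q hqp.symm h
    have hsumv := Fintype.sum_eq_add p q hqp.symm (f := fun j => γ j • v j)
      (fun j hj => by simp [h j hj])
    rw [hsum] at hγsum
    rw [hsumv, eq_neg_of_add_eq_zero_right hγsum, neg_smul, ← sub_eq_add_neg, ← smul_sub,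
      smul_eq_zero] at hγv
    exact hqp (hv (sub_eq_zero.mp (hγv.resolve_left hp))).symm
  exact two_lt_card_iff.mpr ⟨p, q, r, by simpa, by simpa, by simpa, hqp.symm, hrp.symm, hrq.symm⟩

theorem three_lt_card_of_mem_affineRelations [DecidableEq ι] {v : ι → E}
    (hv : Function.Injective v) {γ : ι → ℝ} (hγ : γ ∈ affineRelations v) (hγ0 : γ ≠ 0) {j : ι}
    (hγj : γ j = 0) : 3 < Fintype.card ι := by
  have := card_lt_univ_of_notMem (s := {j | γ j ≠ 0}) (x := j) (by simpa using hγj)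
  have := two_lt_card_filter_ne_zero_of_mem_affineRelations hv hγ hγ0
  omega

theorem exists_dotProduct_sub_eq_ite [DecidableEq ι] {σ : Type*} [Fintype σ] [DecidableEq σ]
    {v : ι → σ → ℝ} {j0 j1 : ι} (hj : j1 ≠ j0) (h : ∀ δ ∈ affineRelations v, δ j1 = 0) :
    ∃ w : σ → ℝ, ∀ j, (v j - v j0) ⬝ᵥ w = if j = j1 then 1 else 0 := by
  set T := Fintype.linearCombination ℝ (fun j => v j - v j0)
  have hT : LinearMap.proj j1 ∈ (LinearMap.ker T).dualAnnihilator := by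
    rw [Submodule.mem_dualAnnihilator]
    intro δ hδ
    rw [LinearMap.mem_ker, Fintype.linearCombination_apply] at hδ
    have hrel : δ - (∑ j, δ j) • Pi.single j0 1 ∈ affineRelations v := by
      constructor
      · simpa [sub_smul, smul_sub, sum_sub_distrib, ← sum_smul, Pi.single_apply, ite_smul]
          using hδ
      · simp [Pi.single_apply]
    simpa [hj] using h _ hrel
  -- `δ ↦ δ j1` vanishes on `ker T`, so it factors through `T`; `w` represents the factor.
  rw [← LinearMap.range_dualMap_eq_dualAnnihilator_ker] at hT
  obtain ⟨g, hg⟩ := hT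
  refine ⟨(dotProductEquiv ℝ σ).symm g, fun j => ?_⟩
  rw [dotProduct_comm, ← dotProductEquiv_apply_apply, LinearEquiv.apply_symm_apply]
  simpa [T, Pi.single_apply, eq_comm] using LinearMap.congr_fun hg (Pi.single j 1)

end AffineRelations

section Topology

variable {X Y : Type*} [TopologicalSpace X] [TopologicalSpace Y] {Z : Set X} {W : Set Y}
  {p : X → Y} {s : Y → X}

theorem Set.InvOn.image_connectedComponentIn (hinv : InvOn s p Z W) (hp : ContinuousOn p Z)
    (hs : ContinuousOn s W) (hpZ : MapsTo p Z W) (hsW : MapsTo s W Z) {x : X} (hx : x ∈ Z) :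
    p '' connectedComponentIn Z x = connectedComponentIn W (p x) := by
  have hpZW : p '' Z = W := (hinv.bijOn hpZ hsW).image_eq
  have hsWZ : s '' W = Z := (hinv.symm.bijOn hsW hpZ).image_eq
  refine (hpZW ▸ hp.image_connectedComponentIn_subset hx).antisymm ?_
  have hback := hs.image_connectedComponentIn_subset (hpZ hx)
  rw [hsWZ, hinv.1 hx] at hback
  calc connectedComponentIn W (p x)
      = p '' (s '' connectedComponentIn W (p x)) :=
        (hinv.2.image_image' (connectedComponentIn_subset _ _)).symm
    _ ⊆ p '' connectedComponentIn Z x := image_mono hback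

theorem Set.InvOn.isCompact_connectedComponentIn (hinv : InvOn s p Z W) (hp : ContinuousOn p Z)
    (hs : ContinuousOn s W) (hpZ : MapsTo p Z W) (hsW : MapsTo s W Z) {x : X} (hx : x ∈ Z)
    (hC : IsCompact (connectedComponentIn Z x)) : IsCompact (connectedComponentIn W (p x)) :=
  hinv.image_connectedComponentIn hp hs hpZ hsW hx ▸
    hC.image_of_continuousOn (hp.mono (connectedComponentIn_subset _ _))

theorem IsOpen.not_isCompact_connectedComponentIn [LocallyConnectedSpace Y] [ConnectedSpace Y]
    [NoncompactSpace Y] [T2Space Y] (hW : IsOpen W) {y : Y} (hy : y ∈ W) :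
    ¬IsCompact (connectedComponentIn W y) := fun hC =>
  noncompact_univ Y <| IsClopen.eq_univ ⟨hC.isClosed, hW.connectedComponentIn⟩
    ⟨y, mem_connectedComponentIn hy⟩ ▸ hC

end Topology

section ExpGraph

variable {V : Type*} [NormedAddCommGroup V] [NormedSpace ℝ V]

theorem not_isCompact_connectedComponentIn_setOf_mul_exp_add_eq_zero (φ : V →L[ℝ] ℝ)
    (hφ : LinearMap.ker (φ : V →ₗ[ℝ] ℝ) ≠ ⊥) {w : V} (hw : φ w = 1) {R : V → ℝ}
    (hR : Continuous R) (hRw : ∀ ξ (t : ℝ), R (ξ + t • w) = R ξ) {c : ℝ} (hc : c ≠ 0) {ξ : V}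
    (hξ : c * Real.exp (φ ξ) + R ξ = 0) :
    ¬IsCompact (connectedComponentIn {ξ | c * Real.exp (φ ξ) + R ξ = 0} ξ) := by
  set K := LinearMap.ker (φ : V →ₗ[ℝ] ℝ)
  have : Nontrivial K := Submodule.nontrivial_iff_ne_bot.mpr hφ
  have hZ : ∀ ξ, c * Real.exp (φ ξ) + R ξ = 0 ↔ -R ξ / c = Real.exp (φ ξ) := fun ξ => by
    rw [div_eq_iff hc]
    constructor <;> intro h <;> linarith
  let p : V → K := fun ξ => ⟨ξ - φ ξ • w, by simp [K, hw]⟩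
  let s : K → V := fun k => k + Real.log (-R k / c) • w
  have hRp : ∀ ξ, R (p ξ) = R ξ := fun ξ => by
    simpa [p, sub_eq_add_neg, ← neg_smul] using hRw ξ (-φ ξ)
  have hφs : ∀ k : K, φ (s k) = Real.log (-R k / c) := fun k => by
    simp [s, hw]
  have hinv : InvOn s p {ξ | c * Real.exp (φ ξ) + R ξ = 0} {k | 0 < -R k / c} := by
    refine ⟨fun ξ hξ => ?_, fun k _ => Subtype.ext ?_⟩
    · simp [s, p, hRp, (hZ ξ).mp hξ]
    · simp [p, hφs, s]
  have hpZ : MapsTo p {ξ | c * Real.exp (φ ξ) + R ξ = 0} {k | 0 < -R k / c} := fun ξ hξ => by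
    simpa [hRp, (hZ ξ).mp hξ] using Real.exp_pos (φ ξ)
  have hsW : MapsTo s {k | 0 < -R k / c} {ξ | c * Real.exp (φ ξ) + R ξ = 0} := fun k hk => by
    refine (hZ _).mpr ?_
    rw [hφs, Real.exp_log hk]
    simp only [s, hRw]
  have hp : Continuous p := by fun_prop
  have hs : ContinuousOn s {k | 0 < -R k / c} :=
    continuous_subtype_val.continuousOn.add <|
      (((hR.comp continuous_subtype_val).neg.div_const c).continuousOn.log
        fun k hk => (ne_of_gt hk)).smul continuousOn_const
  have hW : IsOpen {k : K | 0 < -R k / c} :=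
    isOpen_lt continuous_const ((hR.comp continuous_subtype_val).neg.div_const c)
  exact fun hC => hW.not_isCompact_connectedComponentIn (hpZ hξ)
    (hinv.isCompact_connectedComponentIn hp.continuousOn hs hpZ hsW hξ hC)

end ExpGraph

section ExponentialSums

variable {ι σ : Type*}

theorem not_isCompact_connectedComponentIn_of_preimage_exp {Z : Set (σ → ℝ)}
    (hZ : ∀ x ∈ Z, ∀ k, 0 < x k)
    (h : ∀ ξ ∈ (Real.exp ∘ ·) ⁻¹' Z, ¬IsCompact (connectedComponentIn ((Real.exp ∘ ·) ⁻¹' Z) ξ))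
    {x : σ → ℝ} (hx : x ∈ Z) : ¬IsCompact (connectedComponentIn Z x) := by
  have hexp_log : ∀ x ∈ Z, Real.exp ∘ Real.log ∘ x = x := fun x hx =>
    funext fun k => Real.exp_log (hZ x hx k)
  have hinv : InvOn (Real.exp ∘ ·) (Real.log ∘ ·) Z ((Real.exp ∘ ·) ⁻¹' Z) :=
    ⟨hexp_log, fun ξ _ => funext fun k => Real.log_exp (ξ k)⟩
  have hlog : MapsTo (Real.log ∘ ·) Z ((Real.exp ∘ ·) ⁻¹' Z) :=
    fun x hx => by rwa [Set.mem_preimage, hexp_log x hx]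
  have hlog_cont : ContinuousOn (Real.log ∘ ·) Z :=
    continuousOn_pi.mpr fun k => (continuous_apply k).continuousOn.log fun x hx => (hZ x hx k).ne'
  exact fun hC => h _ (hlog hx)
    (hinv.isCompact_connectedComponentIn hlog_cont (by fun_prop) hlog (fun _ h => h) hx hC)

variable [Fintype ι] [Fintype σ]

theorem prod_exp_zpow (m : σ → ℤ) (ξ : σ → ℝ) :
    ∏ k, Real.exp (ξ k) ^ m k = Real.exp ((fun k => (m k : ℝ)) ⬝ᵥ ξ) := by
  rw [dotProduct, Real.exp_sum]
  exact prod_congr rfl fun k _ => by rw [← Real.rpow_intCast, ← Real.exp_mul, mul_comm]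

theorem hasDerivAt_prod_update_zpow [DecidableEq σ] (m : σ → ℤ) {x : σ → ℝ} {i : σ}
    (hx : x i ≠ 0) :
    HasDerivAt (fun t => ∏ k, Function.update x i t k ^ m k)
      (m i * (∏ k, x k ^ m k) / x i) (x i) := by
  have hprod : ∀ t,
      ∏ k, Function.update x i t k ^ m k = t ^ m i * ∏ k ∈ univ.erase i, x k ^ m k := fun t => by
      rw [prod_congr rfl fun k _ => Function.apply_update (fun k y => y ^ m k) x i t k,
        prod_update_of_mem (mem_univ i), sdiff_singleton_eq_erase]
  simp_rw [hprod]
  refine ((hasDerivAt_zpow (m i) (x i) (Or.inl hx)).mul_const _).congr_deriv ?_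
  rw [← mul_prod_erase univ _ (mem_univ i), zpow_sub_one₀ hx]
  ring

theorem hasDerivAt_sum_prod_update_zpow [DecidableEq σ] (a : ι → σ → ℤ) (c : ι → ℝ)
    {x : σ → ℝ} {i : σ} (hx : x i ≠ 0) :
    HasDerivAt (fun t => ∑ j, c j * ∏ k, Function.update x i t k ^ a j k)
      ((∑ j, (c j * ∏ k, x k ^ a j k) * a j i) / x i) (x i) := by
  refine (HasDerivAt.fun_sum fun j _ =>
    (hasDerivAt_prod_update_zpow (a j) hx).const_mul (c j)).congr_deriv ?_
  rw [sum_div]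
  exact sum_congr rfl fun j _ => by ring

theorem exists_hasDerivAt_update_ne_zero [DecidableEq σ] (a : ι → σ → ℤ) (c : ι → ℝ) {j1 : ι}
    (hc : c j1 ≠ 0) (h : ∀ δ ∈ affineRelations (fun j k => (a j k : ℝ)), δ j1 = 0) {x : σ → ℝ}
    (hx : ∀ k, 0 < x k) (hfx : ∑ j, c j * ∏ k, x k ^ a j k = 0) :
    ∃ i d, d ≠ 0 ∧
      HasDerivAt (fun t => ∑ j, c j * ∏ k, Function.update x i t k ^ a j k) d (x i) := by
  set y := fun j => c j * ∏ k, x k ^ a j k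
  have hy : y ∉ affineRelations (fun j k => (a j k : ℝ)) := fun hrel =>
    mul_ne_zero hc (prod_pos fun k _ => zpow_pos (hx k) _).ne' (h y hrel)
  obtain ⟨i, hi⟩ : ∃ i, ∑ j, y j * a j i ≠ 0 := by
    by_contra! hzero
    exact hy ⟨funext fun i => by simpa using hzero i, hfx⟩
  exact ⟨i, _, div_ne_zero hi (hx i).ne', hasDerivAt_sum_prod_update_zpow a c (hx i).ne'⟩

theorem not_isCompact_connectedComponentIn_posZeroSet [DecidableEq ι]
    (hσ : 1 < Fintype.card σ) (a : ι → σ → ℤ) (c : ι → ℝ) {j0 j1 : ι} (hc : c j1 ≠ 0) {w : σ → ℝ}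
    (hw : ∀ j, ((fun k => (a j k : ℝ)) - fun k => (a j0 k : ℝ)) ⬝ᵥ w = if j = j1 then 1 else 0)
    {x : σ → ℝ} (hx : x ∈ {x | (∀ k, 0 < x k) ∧ ∑ j, c j * ∏ k, x k ^ a j k = 0}) :
    ¬IsCompact (connectedComponentIn {x | (∀ k, 0 < x k) ∧ ∑ j, c j * ∏ k, x k ^ a j k = 0} x) := by
  set d : ι → σ → ℝ := fun j => (fun k => (a j k : ℝ)) - fun k => (a j0 k : ℝ)
  set φ : (σ → ℝ) →L[ℝ] ℝ := LinearMap.toContinuousLinearMap (dotProductBilin ℝ ℝ (d j1))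
  set R : (σ → ℝ) → ℝ := fun ξ => ∑ j ∈ univ.erase j1, c j * Real.exp (d j ⬝ᵥ ξ)
  have hsplit : ∀ ξ : σ → ℝ, ∑ j, c j * ∏ k, Real.exp (ξ k) ^ a j k
      = Real.exp ((fun k => (a j0 k : ℝ)) ⬝ᵥ ξ) * (c j1 * Real.exp (φ ξ) + R ξ) := fun ξ => by
    have hexp : ∀ j, Real.exp ((fun k => (a j k : ℝ)) ⬝ᵥ ξ)
        = Real.exp ((fun k => (a j0 k : ℝ)) ⬝ᵥ ξ) * Real.exp (d j ⬝ᵥ ξ) := fun j => by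
      rw [← Real.exp_add, sub_dotProduct, add_sub_cancel]
    calc ∑ j, c j * ∏ k, Real.exp (ξ k) ^ a j k
        = ∑ j, Real.exp ((fun k => (a j0 k : ℝ)) ⬝ᵥ ξ) * (c j * Real.exp (d j ⬝ᵥ ξ)) :=
          sum_congr rfl fun j _ => by rw [prod_exp_zpow, hexp]; ring
      _ = _ := by rw [← mul_sum, ← add_sum_erase _ _ (mem_univ j1)]; rfl
  have hpre : (Real.exp ∘ ·) ⁻¹' {x | (∀ k, 0 < x k) ∧ ∑ j, c j * ∏ k, x k ^ a j k = 0}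
      = {ξ | c j1 * Real.exp (φ ξ) + R ξ = 0} := by
    ext ξ
    simp only [Set.mem_preimage, Set.mem_ofPred_eq, Function.comp_apply, Real.exp_pos,
      implies_true, true_and, hsplit, mul_eq_zero, Real.exp_ne_zero, false_or]
  have hker : LinearMap.ker (φ : (σ → ℝ) →ₗ[ℝ] ℝ) ≠ ⊥ := fun h => by
    have := LinearMap.finrank_le_finrank_of_injective (LinearMap.ker_eq_bot.mp h)
    simp only [Module.finrank_fintype_fun_eq_card, Module.finrank_self] at this
    omega
  have hφw : φ w = 1 := (hw j1).trans (if_pos rfl)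
  have hR : Continuous R := by
    simp only [R, dotProduct]
    fun_prop
  have hRw : ∀ ξ (t : ℝ), R (ξ + t • w) = R ξ := fun ξ t =>
    sum_congr rfl fun j hj => by
      rw [dotProduct_add, dotProduct_smul, hw j, if_neg (ne_of_mem_erase hj), smul_zero, add_zero]
  refine not_isCompact_connectedComponentIn_of_preimage_exp (fun x hx => hx.1) ?_ hx
  rw [hpre]
  exact fun ξ hξ =>
    not_isCompact_connectedComponentIn_setOf_mul_exp_add_eq_zero φ hker hφw hR hRw hc hξ

end ExponentialSums

theorem degenerate_circuit_zero_set_smooth_noncompact_general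
    (n : ℕ)
    (a : Fin (n + 2) → Fin n → ℤ) (hinj : Function.Injective a)
    (hdeg : IsDegenerateCircuitFam (fun j => fun i => (a j i : ℝ)))
    (c : Fin (n + 2) → ℝ) (hc : ∀ j, c j ≠ 0) :
    ∀ Z : Set (Fin n → ℝ),
      Z = {x | (∀ i, 0 < x i) ∧ ∑ j, c j * ∏ i, (x i) ^ (a j i) = 0} →
      (∀ x ∈ Z, ∃ (i : Fin n) (d : ℝ), d ≠ 0 ∧
        HasDerivAt
          (fun t : ℝ => ∑ j, c j * ∏ i', (Function.update x i t i') ^ (a j i'))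
          d (x i)) ∧
      (∀ x ∈ Z, ¬ IsCompact (connectedComponentIn Z x)) := by
  rintro Z rfl
  obtain ⟨j0, S, hj0S, hSne, hindep, ⟨γ, hγ0, hγS, hγv, hγsum⟩, -⟩ := hdeg
  obtain ⟨j1, hj1S⟩ : ∃ j1, j1 ∉ S := by
    by_contra! h
    exact hSne (eq_univ_iff_forall.mpr h)
  have hγ : γ ∈ affineRelations (fun j i => (a j i : ℝ)) := ⟨hγv, hγsum⟩
  have hγj1 : γ j1 = 0 := hγS j1 hj1S
  have hrel : ∀ δ ∈ affineRelations (fun j i => (a j i : ℝ)), δ j1 = 0 := fun δ hδ =>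
    apply_eq_zero_of_mem_affineRelations (fun η hη hη0 => hindep η hη0 hη.1 hη.2) hγ
      (fun h => hγ0 (hindep γ h hγv hγsum)) hγj1 hδ
  refine ⟨fun x hx => exists_hasDerivAt_update_ne_zero a c (hc j1) hrel hx.1 hx.2,
    fun x hx => ?_⟩
  have hn : 1 < Fintype.card (Fin n) := by
    have := three_lt_card_of_mem_affineRelations (Int.cast_injective.comp_left.comp hinj) hγ hγ0
      hγj1
    simp only [Fintype.card_fin] at this ⊢
    omega
  obtain ⟨w, hw⟩ := exists_dotProduct_sub_eq_ite (ne_of_mem_of_not_mem hj0S hj1S).symm hrel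
  exact not_isCompact_connectedComponentIn_posZeroSet hn a c (hc j1) hw hx

/-- If the support of an n-variate (n+2)-nomial is a degenerate
circuit, then every point of the positive zero set is a regular point of f
(so Z_+(f) is a smooth embedded (n−1)-manifold), and every connected component
of the positive zero set is non-compact. -/
theorem degenerate_circuit_zero_set_smooth_noncompact
    (n : ℕ) (hn : 1 ≤ n)
    (a : Fin (n + 2) → Fin n → ℤ) (hinj : Function.Injective a)
    (hdeg : IsDegenerateCircuitFam (fun j => fun i => (a j i : ℝ)))
    (c : Fin (n + 2) → ℝ) (hc : ∀ j, c j ≠ 0) :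
    ∀ Z : Set (Fin n → ℝ),
      Z = {x | (∀ i, 0 < x i) ∧ ∑ j, c j * ∏ i, (x i) ^ (a j i) = 0} →
      (∀ x ∈ Z, ∃ (i : Fin n) (d : ℝ), d ≠ 0 ∧
        HasDerivAt
          (fun t : ℝ => ∑ j, c j * ∏ i', (Function.update x i t i') ^ (a j i'))
          d (x i)) ∧
      (∀ x ∈ Z, ¬ IsCompact (connectedComponentIn Z x)) :=
  degenerate_circuit_zero_set_smooth_noncompact_general n a hinj hdeg c hc
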